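/- arXiv:1810.07478 — 2 statements merged into one kernel-verified Lean document; each statement's English description precedes it below -/
import Mathlib

section
/- The value C₂ = Σ_{n=1}^∞ χ₆(n)/n² satisfies C₂ = (5/√27) · Cl₂(π/3), where Cl₂(π/3) = Σ_{m=1}^∞ sin(mπ/3)/m² is the Clausen value; that is, Σ_{n=1}^∞ χ₆(n)/n² = (5/√27) Σ_{m=1}^∞ sin(mπ/3)/m². -/
open scoped BigOperators Real

/-- The primitive Dirichlet character modulo 6: `χ₆(n) = 1` if `n ≡ 1 (mod 6)`,
`χ₆(n) = -1` if `n ≡ 5 (mod 6)`, and `0` otherwise. -/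
def chi6 (n : ℕ) : ℝ :=
  if n % 6 = 1 then 1 else if n % 6 = 5 then -1 else 0

/-!
Write `sin (n π / 3) = (√3 / 2) s(n)`, where `s` is 6-periodic with values `0, 1, 1, 0, -1, -1`,
and split each series `L(a) = ∑ a(n) / n²`, for `a = χ₆`, `χ₃` (the character mod 3) and `s`, into
its even and odd terms. The three odd parts coincide, and equal `L(χ₆)` since `χ₆` vanishes on even
numbers. On even numbers `χ₃(2k) = -χ₃(k)` and `s(2k) = χ₃(k)`, so `L(χ₃) = -L(χ₃)/4 + L(χ₆)` and
`L(s) = L(χ₃)/4 + L(χ₆) = (6/5) L(χ₆)`; finally `(√3 / 2)(6 / 5) = √27 / 5`.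
-/

theorem summable_div_sq_of_abs_le {a : ℕ → ℝ} {C : ℝ} (ha : ∀ n, |a n| ≤ C) :
    Summable fun n : ℕ => a n / (n : ℝ) ^ 2 := by
  refine .of_norm_bounded ((Real.summable_one_div_nat_pow.mpr one_lt_two).mul_left C) fun n => ?_
  rw [Real.norm_eq_abs, abs_div, abs_of_nonneg (sq_nonneg (n : ℝ)), ← div_eq_mul_one_div]
  exact div_le_div_of_nonneg_right (ha n) (sq_nonneg _)

theorem tsum_succ_div_sq {a : ℕ → ℝ} {C : ℝ} (ha : ∀ n, |a n| ≤ C) :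
    ∑' n : ℕ, a (n + 1) / ((n : ℝ) + 1) ^ 2 = ∑' n : ℕ, a n / (n : ℝ) ^ 2 := by
  rw [(summable_div_sq_of_abs_le ha).tsum_eq_zero_add]
  simp

theorem tsum_div_sq_eq_even_add_odd {a : ℕ → ℝ} {C : ℝ} (ha : ∀ n, |a n| ≤ C) :
    ∑' n : ℕ, a n / (n : ℝ) ^ 2 =
      (∑' k : ℕ, a (2 * k) / (k : ℝ) ^ 2) / 4 +
        ∑' k : ℕ, a (2 * k + 1) / ((2 * k + 1 : ℕ) : ℝ) ^ 2 := by
  have hs := summable_div_sq_of_abs_le ha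
  rw [← tsum_even_add_odd (f := fun n : ℕ => a n / (n : ℝ) ^ 2)
    (hs.comp_injective (mul_right_injective₀ two_ne_zero))
    (hs.comp_injective fun _ _ h => by simpa using h), ← tsum_div_const]
  congr 1
  refine tsum_congr fun k => ?_
  push_cast
  ring

def chi3 (n : ℕ) : ℝ :=
  if n % 3 = 1 then 1 else if n % 3 = 2 then -1 else 0

def signSinPiDivThree (n : ℕ) : ℝ :=
  if n % 6 = 1 ∨ n % 6 = 2 then 1 else if n % 6 = 4 ∨ n % 6 = 5 then -1 else 0

theorem abs_chi6_le_one (n : ℕ) : |chi6 n| ≤ 1 := by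
  unfold chi6; split_ifs <;> norm_num

theorem abs_chi3_le_one (n : ℕ) : |chi3 n| ≤ 1 := by
  unfold chi3; split_ifs <;> norm_num

theorem abs_signSinPiDivThree_le_one (n : ℕ) : |signSinPiDivThree n| ≤ 1 := by
  unfold signSinPiDivThree; split_ifs <;> norm_num

theorem chi6_two_mul (k : ℕ) : chi6 (2 * k) = 0 := by
  unfold chi6; split_ifs <;> first | omega | rfl

theorem chi3_two_mul (k : ℕ) : chi3 (2 * k) = -chi3 k := by
  unfold chi3; split_ifs <;> first | omega | norm_num

theorem chi3_two_mul_add_one (k : ℕ) : chi3 (2 * k + 1) = chi6 (2 * k + 1) := by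
  unfold chi3 chi6; split_ifs <;> first | omega | norm_num

theorem signSinPiDivThree_two_mul (k : ℕ) : signSinPiDivThree (2 * k) = chi3 k := by
  unfold signSinPiDivThree chi3; split_ifs <;> first | omega | norm_num

theorem signSinPiDivThree_two_mul_add_one (k : ℕ) :
    signSinPiDivThree (2 * k + 1) = chi6 (2 * k + 1) := by
  unfold signSinPiDivThree chi6; split_ifs <;> first | omega | norm_num

theorem sin_nat_mul_pi_div_three (n : ℕ) :
    Real.sin (n * π / 3) = √3 / 2 * signSinPiDivThree n := by
  have hperiod : Real.sin (n * π / 3) = Real.sin ((n % 6 : ℕ) * π / 3) := by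
    conv_lhs => rw [← Nat.mod_add_div n 6]
    push_cast
    rw [show ((n % 6 : ℕ) + 6 * (n / 6 : ℕ) : ℝ) * π / 3 =
        (n % 6 : ℕ) * π / 3 + (n / 6 : ℕ) * (2 * π) by ring]
    exact Real.sin_add_nat_mul_two_pi _ _
  have hsign : signSinPiDivThree n = signSinPiDivThree (n % 6) := by
    simp only [signSinPiDivThree, Nat.mod_mod]
  rw [hperiod, hsign]
  have hr := Nat.mod_lt n (by norm_num : 0 < 6)
  interval_cases n % 6
  · simp [signSinPiDivThree]
  · simp [signSinPiDivThree, Real.sin_pi_div_three]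
  · rw [show ((2 : ℕ) : ℝ) * π / 3 = π - π / 3 by push_cast; ring, Real.sin_pi_sub]
    simp [signSinPiDivThree, Real.sin_pi_div_three]
  · simp [signSinPiDivThree]
  · rw [show ((4 : ℕ) : ℝ) * π / 3 = π / 3 + π by push_cast; ring, Real.sin_add_pi]
    simp [signSinPiDivThree, Real.sin_pi_div_three]
  · rw [show ((5 : ℕ) : ℝ) * π / 3 = -(π / 3) + 2 * π by push_cast; ring, Real.sin_add_two_pi,
      Real.sin_neg]
    simp [signSinPiDivThree, Real.sin_pi_div_three]

theorem tsum_sin_mul_pi_div_three_div_sq :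
    ∑' m : ℕ, Real.sin (((m : ℝ) + 1) * π / 3) / ((m : ℝ) + 1) ^ 2 =
      √3 / 2 * ∑' n : ℕ, signSinPiDivThree n / (n : ℝ) ^ 2 := calc
  _ = ∑' n : ℕ, Real.sin (n * π / 3) / (n : ℝ) ^ 2 := by
    exact_mod_cast tsum_succ_div_sq (a := fun n : ℕ => Real.sin (n * π / 3)) fun n =>
      Real.abs_sin_le_one _
  _ = ∑' n : ℕ, √3 / 2 * (signSinPiDivThree n / (n : ℝ) ^ 2) :=
    tsum_congr fun n => by rw [sin_nat_mul_pi_div_three, mul_div_assoc]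
  _ = _ := tsum_mul_left

/-- `C₂ = Σ_{n≥1} χ₆(n)/n² = (5/√27)·Cl₂(π/3)`, where `Cl₂(π/3) = Σ_{m≥1} sin(mπ/3)/m²`. -/
theorem C2_eq_clausen :
    ∑' n : ℕ, chi6 (n + 1) / ((n : ℝ) + 1) ^ 2 =
      (5 / Real.sqrt 27) * ∑' m : ℕ, Real.sin (((m : ℝ) + 1) * π / 3) / ((m : ℝ) + 1) ^ 2 := by
  have hchi6 : ∑' n : ℕ, chi6 n / (n : ℝ) ^ 2 =
      ∑' k : ℕ, chi6 (2 * k + 1) / ((2 * k + 1 : ℕ) : ℝ) ^ 2 := by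
    rw [tsum_div_sq_eq_even_add_odd abs_chi6_le_one]
    simp only [chi6_two_mul, zero_div, tsum_zero, zero_add]
  have hchi3 : ∑' n : ℕ, chi3 n / (n : ℝ) ^ 2 =
      -(∑' n : ℕ, chi3 n / (n : ℝ) ^ 2) / 4 +
        ∑' k : ℕ, chi6 (2 * k + 1) / ((2 * k + 1 : ℕ) : ℝ) ^ 2 := by
    conv_lhs => rw [tsum_div_sq_eq_even_add_odd abs_chi3_le_one]
    simp only [chi3_two_mul, chi3_two_mul_add_one, neg_div, tsum_neg]
  have hsign : ∑' n : ℕ, signSinPiDivThree n / (n : ℝ) ^ 2 =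
      (∑' n : ℕ, chi3 n / (n : ℝ) ^ 2) / 4 +
        ∑' k : ℕ, chi6 (2 * k + 1) / ((2 * k + 1 : ℕ) : ℝ) ^ 2 := by
    rw [tsum_div_sq_eq_even_add_odd abs_signSinPiDivThree_le_one]
    simp only [signSinPiDivThree_two_mul, signSinPiDivThree_two_mul_add_one]
  have h27 : √27 = 3 * √3 := by
    rw [show (27 : ℝ) = 3 ^ 2 * 3 by norm_num, Real.sqrt_mul (by positivity),
      Real.sqrt_sq (by norm_num)]
  rw [tsum_succ_div_sq abs_chi6_le_one, tsum_sin_mul_pi_div_three_div_sq, hsign, hchi6, h27]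
  field_simp
  linarith
end

section
/- For all positive integers c, N, M, n with gcd(c, N) = 1, the Kloosterman-type sum satisfies the symmetry K(c, N, M, n) = K(c, N, n, M); consequently the Rademacher sums satisfy R_{N,M}(n)/M = R_{N,n}(M)/n termwise in c. -/
open scoped BigOperators Real

/-- The Kloosterman-type sum `K(c,N,M,n) = Σ_{r∈[1,c], gcd(r,c)=1} e^{2πi(Mr - ns)/c}`,
where `s` is the inverse of `N·r` modulo `c`. -/
noncomputable def kloosterman (c N M n : ℕ) : ℂ :=
  ∑ r ∈ (Finset.Icc 1 c).filter fun r => Nat.Coprime r c,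
    Complex.exp (2 * Real.pi * Complex.I *
      ((M : ℂ) * (r : ℂ) - (n : ℂ) * ((((N * r : ℕ) : ZMod c)⁻¹).val : ℂ)) / (c : ℂ))

/-- The modified Bessel function `I₁(x) = Σ_{k≥0} (x/2)^{2k+1}/(k!(k+1)!)`. -/
noncomputable def besselI1 (x : ℝ) : ℝ :=
  ∑' k : ℕ, (x / 2) ^ (2 * k + 1) / ((Nat.factorial k : ℝ) * (Nat.factorial (k + 1) : ℝ))

/-- The `c`-th term of the Rademacher sum `R_{N,M}(n)`. -/
noncomputable def rademacherTerm (N M n c : ℕ) : ℂ :=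
  ((2 * Real.pi * besselI1 (4 * Real.pi * Real.sqrt ((n : ℝ) * M / N) / c) /
      (Real.sqrt ((n : ℝ) * N / M) * c) : ℝ) : ℂ) * kloosterman c N M n

/-! Over the units `u` of `ℤ/cℤ`, `K(c,N,M,n) = Σ_u ψ(M u - n (N u)⁻¹)` with `ψ` the standard
additive character, and the involution `u ↦ -(N u)⁻¹` exchanges `M` and `n`. For the Rademacher
terms, `√(nN/M) · M = √(nNM)` makes the coefficient divided by `M` symmetric in `M` and `n`. -/

open Finset

section UnitsKloosterman

variable {R β : Type*} [CommRing R] [Fintype Rˣ] [AddCommMonoid β]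

noncomputable def unitsKloosterman (ψ : R → β) (ν : Rˣ) (a b : R) : β :=
  ∑ u : Rˣ, ψ (a * u - b * ↑(ν * u)⁻¹)

theorem unitsKloosterman_comm (ψ : R → β) (ν : Rˣ) (a b : R) :
    unitsKloosterman ψ ν a b = unitsKloosterman ψ ν b a := by
  have hinv (u : Rˣ) : (ν * -(ν * u)⁻¹)⁻¹ = -u := by
    rw [mul_neg, inv_neg, mul_inv_rev, inv_inv, mul_comm ν, mul_inv_cancel_right]
  have hinvol : Function.Involutive fun u : Rˣ => -(ν * u)⁻¹ := fun u => by
    simp only [hinv, neg_neg]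
  refine Fintype.sum_equiv hinvol.toPerm _ _ fun u => ?_
  simp only [Function.Involutive.coe_toPerm, hinv, Units.val_neg]
  ring_nf

end UnitsKloosterman

theorem sum_filter_coprime_Icc_eq_sum_units {β : Type*} [AddCommMonoid β] (c : ℕ) [NeZero c]
    (f : ZMod c → β) :
    ∑ r ∈ (Icc 1 c).filter (Nat.Coprime · c), f r = ∑ u : (ZMod c)ˣ, f u := by
  have hcast (x : ZMod c) : (((x - 1).val + 1 : ℕ) : ZMod c) = x := by
    rw [Nat.cast_succ, ZMod.natCast_zmod_val, sub_add_cancel]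
  refine sum_bij' (fun r hr => ZMod.unitOfCoprime r (mem_filter.mp hr).2)
    (fun u _ => ((u : ZMod c) - 1).val + 1) (fun _ _ => mem_univ _) ?_ ?_ ?_ fun _ _ => rfl
  · intro u _
    simp only [mem_filter, mem_Icc]
    refine ⟨⟨Nat.le_add_left _ _, ZMod.val_lt _⟩, ?_⟩
    rw [← ZMod.isUnit_iff_coprime, hcast]
    exact u.isUnit
  · intro r hr
    obtain ⟨hr1, hrc⟩ := mem_Icc.mp (mem_filter.mp hr).1
    rw [ZMod.coe_unitOfCoprime, ← Nat.cast_pred hr1, ZMod.val_natCast,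
      Nat.mod_eq_of_lt (by omega), Nat.sub_add_cancel hr1]
  · intro u _
    ext
    rw [ZMod.coe_unitOfCoprime, hcast]

theorem kloosterman_eq_unitsKloosterman (c N M n : ℕ) [NeZero c] (h : N.Coprime c) :
    kloosterman c N M n = unitsKloosterman ZMod.stdAddChar (ZMod.unitOfCoprime N h) M n := by
  have hterm (r : ℕ) : Complex.exp (2 * π * Complex.I *
      ((M : ℂ) * r - n * ((((N * r : ℕ) : ZMod c)⁻¹).val : ℂ)) / c) =
      ZMod.stdAddChar ((M * r - n * (N * r : ZMod c)⁻¹ : ZMod c)) := by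
    have hcoe := ZMod.stdAddChar_coe (N := c) (M * r - n * (((N * r : ℕ) : ZMod c)⁻¹).val)
    push_cast [ZMod.natCast_zmod_val] at hcoe
    rw [Nat.cast_mul]
    exact hcoe.symm
  rw [kloosterman, unitsKloosterman]
  simp_rw [hterm]
  rw [sum_filter_coprime_Icc_eq_sum_units c
    fun x => ZMod.stdAddChar (M * x - n * (N * x)⁻¹ : ZMod c)]
  simp only [← ZMod.inv_coe_unit, Units.val_mul, ZMod.coe_unitOfCoprime]

theorem Real.sqrt_div_mul_self (x : ℝ) {y : ℝ} (hy : 0 ≤ y) : √(x / y) * y = √(x * y) := by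
  rw [sqrt_div' x hy, sqrt_mul' x hy, div_mul_eq_mul_div, mul_div_assoc, div_sqrt]

theorem rademacherTerm_div (N M n c : ℕ) :
    rademacherTerm N M n c / M =
      ((2 * π * besselI1 (4 * π * √(n * M / N) / c) / (√(N * (n * M)) * c) : ℝ) : ℂ) *
        kloosterman c N M n := by
  have hdenom : √(n * N / M) * c * M = √(N * (n * M)) * c := by
    rw [mul_right_comm, Real.sqrt_div_mul_self _ M.cast_nonneg]
    ring_nf
  rw [rademacherTerm, mul_div_right_comm, ← Complex.ofReal_natCast, ← Complex.ofReal_div, div_div,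
    hdenom]

theorem kloosterman_symm_general (c N M n : ℕ) (hc : 0 < c) (h : Nat.Coprime c N) :
    kloosterman c N M n = kloosterman c N n M ∧
      rademacherTerm N M n c / (M : ℂ) = rademacherTerm N n M c / (n : ℂ) := by
  have : NeZero c := ⟨hc.ne'⟩
  have hK : kloosterman c N M n = kloosterman c N n M := by
    rw [kloosterman_eq_unitsKloosterman c N M n h.symm,
      kloosterman_eq_unitsKloosterman c N n M h.symm, unitsKloosterman_comm]
  refine ⟨hK, ?_⟩
  rw [rademacherTerm_div, rademacherTerm_div, hK, mul_comm (n : ℝ) M]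

/-- Symmetry of the Kloosterman sum `K(c,N,M,n) = K(c,N,n,M)`; consequently the Rademacher
sums satisfy `R_{N,M}(n)/M = R_{N,n}(M)/n` termwise in `c`. -/
theorem kloosterman_symm (c N M n : ℕ) (hc : 0 < c) (hN : 0 < N) (hM : 0 < M)
    (hn : 0 < n) (h : Nat.Coprime c N) :
    kloosterman c N M n = kloosterman c N n M ∧
      rademacherTerm N M n c / (M : ℂ) = rademacherTerm N n M c / (n : ℂ) :=
  kloosterman_symm_general c N M n hc h
end
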